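/- Let d ≥ 1 and let φ : ℝ^d → ℝ^d be twice continuously differentiable with compact support. For each x let J(x) denote the Jacobian matrix (∂_j φ_i(x))_{ij} and let stf(J) := (1/2)(J + Jᵀ) − ((tr J)/d)·I be its symmetric trace-free part. Then ∫_{ℝ^d} ‖stf(J(x))‖_F² dx = ∫_{ℝ^d} [ (1/2)‖J(x)‖_F² + (1/2 − 1/d)(tr J(x))² ] dx, where ‖·‖_F is the Frobenius norm and tr J = Σ_i ∂_i φ_i is the divergence of φ. -/

import Mathlib

open Matrix MeasureTheory

/-- The Jacobian matrix `J(x)_{ij} = ∂_j φ_i (x)` of a vector field on `ℝᵈ`. -/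
noncomputable def jacobian {d : ℕ}
    (φ : EuclideanSpace ℝ (Fin d) → EuclideanSpace ℝ (Fin d))
    (x : EuclideanSpace ℝ (Fin d)) : Matrix (Fin d) (Fin d) ℝ :=
  Matrix.of fun i j => fderiv ℝ φ x (EuclideanSpace.single j (1 : ℝ)) i

/-- The symmetric trace-free part `stf(M) = (1/2)(M + Mᵀ) − ((tr M)/d)·I`. -/
noncomputable def stfMat {d : ℕ} (M : Matrix (Fin d) (Fin d) ℝ) :
    Matrix (Fin d) (Fin d) ℝ :=
  ((1 : ℝ) / 2) • (M + Mᵀ) - (M.trace / (d : ℝ)) • (1 : Matrix (Fin d) (Fin d) ℝ)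

/-!
Pointwise, `‖stf A‖² = ½‖A‖² + (½ − 1/d)(tr A)² + ½(tr(A²) − (tr A)²)`: expand
`‖S − (tr A / d) I‖²` for the symmetric part `S` of `A`, whose square norm is
`½‖A‖² + ½ tr(A²)`. The last term is a null Lagrangian: integrating by parts twice and using
the symmetry of second derivatives, `∫ ∂_j φ_i ∂_i φ_j = ∫ ∂_i φ_i ∂_j φ_j` for every `i, j`.
-/

theorem sum_sq_eq_trace_mul_transpose {n : Type*} [Fintype n] (M : Matrix n n ℝ) :
    ∑ i, ∑ j, M i j ^ 2 = (M * Mᵀ).trace := by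
  simp [trace, mul_apply, sq]

theorem sum_sq_stfMat {d : ℕ} (A : Matrix (Fin d) (Fin d) ℝ) :
    ∑ i, ∑ j, stfMat A i j ^ 2 = 1 / 2 * ∑ i, ∑ j, A i j ^ 2
      + (1 / 2 - 1 / (d : ℝ)) * A.trace ^ 2 + 1 / 2 * ((A * A).trace - A.trace ^ 2) := by
  rcases Nat.eq_zero_or_pos d with rfl | hd
  · simp
  have hd' : (d : ℝ) ≠ 0 := by positivity
  simp only [sum_sq_eq_trace_mul_transpose, stfMat, transpose_sub, transpose_smul, transpose_add,
    transpose_transpose, transpose_one, sub_mul, mul_sub, add_mul, mul_add, smul_mul_assoc,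
    mul_smul_comm, one_mul, mul_one, trace_sub, trace_add, trace_smul, trace_one, trace_transpose,
    smul_eq_mul, Fintype.card_fin]
  rw [trace_mul_comm Aᵀ A, ← transpose_mul, trace_transpose]
  field_simp
  ring

theorem fderiv_fderiv_apply_comm {E : Type*} [NormedAddCommGroup E] [NormedSpace ℝ E]
    {g : E → ℝ} (hg : ContDiff ℝ 2 g) (v w x : E) :
    fderiv ℝ (fderiv ℝ g · w) x v = fderiv ℝ (fderiv ℝ g · v) x w := by
  have hdiff : Differentiable ℝ (fderiv ℝ g) :=
    (hg.fderiv_right (m := 1) le_rfl).differentiable one_ne_zero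
  simp only [fderiv_clm_apply (hdiff x) (differentiableAt_const _)]
  simpa using (hg.contDiffAt.isSymmSndFDerivAt (by simp)).eq v w

section IntegrationByParts

variable {E : Type*} [NormedAddCommGroup E] [NormedSpace ℝ E] [FiniteDimensional ℝ E]
  [MeasurableSpace E] [BorelSpace E] {μ : Measure E} [μ.IsAddHaarMeasure]

theorem integral_fderiv_mul_eq_neg_mul_fderiv {f h : E → ℝ} (hf : ContDiff ℝ 1 f)
    (hsf : HasCompactSupport f) (hh : ContDiff ℝ 1 h) (v : E) :
    ∫ x, fderiv ℝ f x v * h x ∂μ = -∫ x, f x * fderiv ℝ h x v ∂μ := by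
  have hf' : Continuous (fderiv ℝ f · v) :=
    (hf.continuous_fderiv one_ne_zero).clm_apply continuous_const
  have hh' : Continuous (fderiv ℝ h · v) :=
    (hh.continuous_fderiv one_ne_zero).clm_apply continuous_const
  rw [integral_mul_fderiv_eq_neg_fderiv_mul_of_integrable
      ((hf'.mul hh.continuous).integrable_of_hasCompactSupport
        (hsf.fderiv_apply ℝ v).mul_right)
      ((hf.continuous.mul hh').integrable_of_hasCompactSupport hsf.mul_right)
      ((hf.continuous.mul hh.continuous).integrable_of_hasCompactSupport hsf.mul_right)
      (fun x _ => hf.differentiable one_ne_zero x) (fun x _ => hh.differentiable one_ne_zero x),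
    neg_neg]

theorem integral_fderiv_mul_fderiv_comm {f g : E → ℝ} (hf : ContDiff ℝ 1 f)
    (hsf : HasCompactSupport f) (hg : ContDiff ℝ 2 g) (v w : E) :
    ∫ x, fderiv ℝ f x v * fderiv ℝ g x w ∂μ = ∫ x, fderiv ℝ f x w * fderiv ℝ g x v ∂μ := by
  have hg' (u : E) : ContDiff ℝ 1 (fderiv ℝ g · u) :=
    (hg.fderiv_right (m := 1) le_rfl).clm_apply contDiff_const
  rw [integral_fderiv_mul_eq_neg_mul_fderiv hf hsf (hg' w),
    integral_fderiv_mul_eq_neg_mul_fderiv hf hsf (hg' v)]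
  simp_rw [fderiv_fderiv_apply_comm hg v w]

end IntegrationByParts

section Jacobian

variable {d : ℕ} {φ : EuclideanSpace ℝ (Fin d) → EuclideanSpace ℝ (Fin d)}

theorem jacobian_apply_eq_fderiv_coord {x : EuclideanSpace ℝ (Fin d)}
    (hφ : DifferentiableAt ℝ φ x) (i j : Fin d) :
    jacobian φ x i j = fderiv ℝ (φ · i) x (EuclideanSpace.single j 1) := by
  have h : HasFDerivAt (φ · i) ((EuclideanSpace.proj (𝕜 := ℝ) i).comp (fderiv ℝ φ x)) x :=
    (EuclideanSpace.proj (𝕜 := ℝ) i).hasFDerivAt.comp x hφ.hasFDerivAt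
  rw [h.fderiv]
  rfl

theorem ContDiff.continuous_jacobian (hφ : ContDiff ℝ 1 φ) : Continuous (jacobian φ) :=
  continuous_pi fun i => continuous_pi fun _ =>
    (EuclideanSpace.proj (𝕜 := ℝ) i).continuous.comp
      ((hφ.continuous_fderiv one_ne_zero).clm_apply continuous_const)

theorem hasCompactSupport_jacobian (hsupp : HasCompactSupport φ) :
    HasCompactSupport (jacobian φ) :=
  (hsupp.fderiv ℝ).mono fun x hx h0 => hx (by ext; simp [jacobian, h0])

theorem integrable_comp_jacobian {G : Type*} [NormedAddCommGroup G]
    {μ : Measure (EuclideanSpace ℝ (Fin d))} [IsFiniteMeasureOnCompacts μ]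
    (hφ : ContDiff ℝ 1 φ) (hsupp : HasCompactSupport φ)
    {F : Matrix (Fin d) (Fin d) ℝ → G} (hF : Continuous F) (hF0 : F 0 = 0) :
    Integrable (fun x => F (jacobian φ x)) μ :=
  (hF.comp hφ.continuous_jacobian).integrable_of_hasCompactSupport
    ((hasCompactSupport_jacobian hsupp).comp_left hF0)

theorem integral_trace_jacobian_mul_self {μ : Measure (EuclideanSpace ℝ (Fin d))}
    [μ.IsAddHaarMeasure] (hφ : ContDiff ℝ 2 φ) (hsupp : HasCompactSupport φ) :
    ∫ x, (jacobian φ x * jacobian φ x).trace ∂μ = ∫ x, (jacobian φ x).trace ^ 2 ∂μ := by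
  have hcoord (i : Fin d) : ContDiff ℝ 2 (φ · i) :=
    (EuclideanSpace.proj (𝕜 := ℝ) i).contDiff.comp hφ
  have hJ (x) := jacobian_apply_eq_fderiv_coord (hφ.differentiable two_ne_zero x)
  have hint (i j k l : Fin d) : Integrable (fun x => jacobian φ x i j * jacobian φ x k l) μ :=
    integrable_comp_jacobian (hφ.of_le one_le_two) hsupp (F := fun M => M i j * M k l)
      (by fun_prop) (by simp)
  simp only [trace, diag, mul_apply, sq, Finset.sum_mul_sum]
  rw [integral_finsetSum _ fun i _ => integrable_finsetSum _ fun j _ => hint i j j i,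
    integral_finsetSum _ fun i _ => integrable_finsetSum _ fun j _ => hint i i j j]
  refine Finset.sum_congr rfl fun i _ => ?_
  rw [integral_finsetSum _ fun j _ => hint i j j i, integral_finsetSum _ fun j _ => hint i i j j]
  refine Finset.sum_congr rfl fun j _ => ?_
  simp only [hJ]
  exact integral_fderiv_mul_fderiv_comm ((hcoord i).of_le one_le_two)
    (hsupp.comp_left (g := fun v : EuclideanSpace ℝ (Fin d) => v i) rfl) (hcoord j) _ _

end Jacobian

theorem stf_jacobian_integral_identity
    (d : ℕ)
    (φ : EuclideanSpace ℝ (Fin d) → EuclideanSpace ℝ (Fin d))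
    (hφ : ContDiff ℝ 2 φ) (hsupp : HasCompactSupport φ) :
    (∫ x : EuclideanSpace ℝ (Fin d), ∑ i, ∑ j, (stfMat (jacobian φ x) i j) ^ 2)
      = ∫ x : EuclideanSpace ℝ (Fin d),
          ((1 / 2 : ℝ) * (∑ i, ∑ j, (jacobian φ x i j) ^ 2)
            + (1 / 2 - 1 / (d : ℝ)) * (jacobian φ x).trace ^ 2) := by
  have hint {F : Matrix (Fin d) (Fin d) ℝ → ℝ} (hF : Continuous F) (hF0 : F 0 = 0) :
      Integrable (fun x => F (jacobian φ x)) :=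
    integrable_comp_jacobian (hφ.of_le one_le_two) hsupp hF hF0
  have hfrob := hint
    (F := fun M => 1 / 2 * ∑ i, ∑ j, M i j ^ 2 + (1 / 2 - 1 / (d : ℝ)) * M.trace ^ 2)
    (by fun_prop) (by simp)
  have hsq := hint (F := fun M => (M * M).trace) (by fun_prop) (by simp)
  have htr := hint (F := fun M => M.trace ^ 2) (by fun_prop) (by simp)
  have hcross := hint (F := fun M => (M * M).trace - M.trace ^ 2) (by fun_prop) (by simp)
  simp_rw [sum_sq_stfMat]
  rw [integral_add hfrob (hcross.const_mul _), integral_const_mul, integral_sub hsq htr,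
    integral_trace_jacobian_mul_self hφ hsupp, sub_self, mul_zero, add_zero]
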